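/- Let G be a connected simple graph on n ≥ 6 vertices whose Laplacian matrix L(G) has a nonzero eigenvalue α with multiplicity n − m, where 1 ≤ m ≤ n − 2, and let M be any principal submatrix of L(G) of order m + 2, indexed by a set S of m + 2 vertices. Then for every vertex k ∈ S there exists a nonzero vector z ∈ ℝ^{S} with Mz = αz, z_k = 0, and Σ_{i∈S} z_i = 0. -/

import Mathlib

/-!
For a real symmetric matrix algebraic and geometric multiplicities agree, so the `α`-eigenspace of
`L(G)` has dimension `n - m`. Vanishing at `k` and outside `S` imposes only `n - m - 1` linear
conditions, so a nonzero eigenvector `x` survives them; being supported in `S`, it restricts to an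
eigenvector of the principal submatrix. Finally `𝟙ᵀ L(G) = 0` gives `α ∑ xᵢ = 0`.
-/

open scoped Matrix
open Module

namespace Matrix.IsHermitian

variable {𝕜 ι : Type*} [RCLike 𝕜] [Fintype ι] [DecidableEq ι] {A : Matrix ι ι 𝕜}

lemma isSemisimple_toLin' (hA : A.IsHermitian) : Module.End.IsSemisimple (toLin' A) := by
  have hT : Module.End.IsSemisimple (toEuclideanLin A) :=
    Module.End.isFinitelySemisimple_iff_isSemisimple.mp
      (isSymmetric_toEuclideanLin_iff.mpr hA).isFinitelySemisimple
  exact (LinearEquiv.isSemisimple_iff _ _ (WithLp.linearEquiv 2 𝕜 (ι → 𝕜)).symm (by rfl)).mpr hT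

lemma finrank_eigenspace_toLin' (hA : A.IsHermitian) (μ : 𝕜) :
    finrank 𝕜 (Module.End.eigenspace (toLin' A) μ) = A.charpoly.rootMultiplicity μ := by
  rw [← hA.isSemisimple_toLin'.isFinitelySemisimple.maxGenEigenspace_eq_eigenspace,
    LinearMap.finrank_maxGenEigenspace_eq, Matrix.charpoly_toLin']

end Matrix.IsHermitian

theorem Submodule.exists_mem_ne_zero_forall_mem_eq_zero_of_card_lt {K ι : Type*} [Field K]
    (p : Submodule K (ι → K)) [FiniteDimensional K p] (s : Finset ι)
    (hs : s.card < finrank K p) : ∃ x ∈ p, x ≠ 0 ∧ ∀ i ∈ s, x i = 0 := by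
  let restrict : p →ₗ[K] (s → K) := (LinearMap.funLeft K K ((↑) : s → ι)).comp p.subtype
  have hdim : finrank K (s → K) < finrank K p := by simpa using hs
  obtain ⟨x, hx, hx0⟩ := Submodule.exists_mem_ne_zero_of_ne_bot
    (LinearMap.ker_ne_bot_of_finrank_lt hdim (f := restrict))
  refine ⟨x, x.2, by simpa using hx0, fun i hi => congr_fun (LinearMap.mem_ker.mp hx) ⟨i, hi⟩⟩

namespace SimpleGraph

variable {V R : Type*} [Fintype V] [DecidableEq V] (G : SimpleGraph V) [DecidableRel G.Adj]

theorem sum_lapMatrix_mulVec [CommRing R] (x : V → R) : ∑ i, (G.lapMatrix R *ᵥ x) i = 0 :=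
  calc ∑ i, (G.lapMatrix R *ᵥ x) i = (fun _ => 1) ⬝ᵥ (G.lapMatrix R *ᵥ x) := by
        simp [dotProduct]
    _ = (G.lapMatrix R *ᵥ fun _ => 1) ⬝ᵥ x := by
        rw [Matrix.dotProduct_mulVec, ← Matrix.mulVec_transpose, (G.isSymm_lapMatrix (R := R)).eq]
    _ = 0 := by rw [lapMatrix_mulVec_const_eq_zero, zero_dotProduct]

theorem sum_eq_zero_of_lapMatrix_mulVec_eq_smul [CommRing R] [NoZeroDivisors R]
    {x : V → R} {α : R} (hα : α ≠ 0) (hx : G.lapMatrix R *ᵥ x = α • x) : ∑ i, x i = 0 := by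
  have h := G.sum_lapMatrix_mulVec x
  rw [hx] at h
  simp only [Pi.smul_apply, smul_eq_mul, ← Finset.mul_sum] at h
  exact (mul_eq_zero.mp h).resolve_left hα

end SimpleGraph

theorem Finset.sum_coe_sort_eq_sum_univ {ι M : Type*} [Fintype ι] [AddCommMonoid M]
    (s : Finset ι) {f : ι → M} (hf : ∀ i ∉ s, f i = 0) : ∑ i : s, f i = ∑ i, f i := by
  rw [Finset.sum_coe_sort s f]
  exact Finset.sum_subset s.subset_univ fun i _ hi => hf i hi

theorem Matrix.submatrix_mulVec_restrict {ι R : Type*} [Fintype ι] [NonUnitalNonAssocSemiring R]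
    (A : Matrix ι ι R) (s : Finset ι) {x : ι → R} (hx : ∀ i ∉ s, x i = 0) :
    A.submatrix (fun i : s => (i : ι)) (fun j : s => (j : ι)) *ᵥ (fun i : s => x i) =
      fun i : s => (A *ᵥ x) i := by
  ext i
  exact Finset.sum_coe_sort_eq_sum_univ s (f := fun j => A i j * x j) fun j hj => by
    rw [hx j hj, mul_zero]

open Matrix in
theorem principal_submatrix_eigenvector_vanishing_coordinate_general
    (n m : ℕ)
    (G : SimpleGraph (Fin n)) [DecidableRel G.Adj]
    (α : ℝ) (hα : α ≠ 0)
    (hmult : (G.lapMatrix ℝ).charpoly.rootMultiplicity α = n - m)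
    (S : Finset (Fin n)) (hS : S.card = m + 2)
    (k : Fin n) (hk : k ∈ S) :
    ∃ z : {x // x ∈ S} → ℝ, z ≠ 0 ∧
      ((G.lapMatrix ℝ).submatrix (fun i : {x // x ∈ S} => (i : Fin n))
          (fun j : {x // x ∈ S} => (j : Fin n))) *ᵥ z = α • z ∧
      z ⟨k, hk⟩ = 0 ∧ ∑ i, z i = 0 := by
  have hcard : (insert k Sᶜ).card < n - m := by
    have := S.card_le_univ
    rw [Finset.card_insert_of_notMem (by simpa using hk), Finset.card_compl, Fintype.card_fin]
    simp only [Fintype.card_fin] at this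
    omega
  obtain ⟨x, hxE, hx0, hxF⟩ :=
    Submodule.exists_mem_ne_zero_forall_mem_eq_zero_of_card_lt
      (Module.End.eigenspace (toLin' (G.lapMatrix ℝ)) α) (insert k Sᶜ)
      (by rwa [(G.isHermitian_lapMatrix ℝ).finrank_eigenspace_toLin', hmult])
  have hLx : G.lapMatrix ℝ *ᵥ x = α • x := Module.End.mem_eigenspace_iff.mp hxE
  have hxS : ∀ i ∉ S, x i = 0 := fun i hi =>
    hxF i (Finset.mem_insert_of_mem (Finset.mem_compl.mpr hi))
  refine ⟨fun i => x i, ?_, ?_, hxF k (Finset.mem_insert_self k _), ?_⟩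
  · contrapose! hx0
    funext i
    by_cases hi : i ∈ S
    · exact congr_fun hx0 ⟨i, hi⟩
    · exact hxS i hi
  · rw [submatrix_mulVec_restrict _ S hxS, hLx]
    rfl
  · rw [Finset.sum_coe_sort_eq_sum_univ S hxS]
    exact G.sum_eq_zero_of_lapMatrix_mulVec_eq_smul hα hLx

/-- Let `G` be a connected simple graph on `n ≥ 6` vertices whose Laplacian
matrix `L(G)` has a nonzero eigenvalue `α` with multiplicity `n − m`, where `1 ≤ m ≤ n − 2`,
and let `M` be any principal submatrix of `L(G)` of order `m + 2`, indexed by a set `S` of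
`m + 2` vertices. Then for every vertex `k ∈ S` there exists a nonzero vector `z ∈ ℝ^S`
with `M z = α z`, `z_k = 0`, and `∑_{i ∈ S} z_i = 0`. -/
theorem principal_submatrix_eigenvector_vanishing_coordinate
    (n m : ℕ) (hn : 6 ≤ n) (hm : 1 ≤ m) (hmn : m ≤ n - 2)
    (G : SimpleGraph (Fin n)) [DecidableRel G.Adj] (hconn : G.Connected)
    (α : ℝ) (hα : α ≠ 0)
    (hmult : (G.lapMatrix ℝ).charpoly.rootMultiplicity α = n - m)
    (S : Finset (Fin n)) (hS : S.card = m + 2)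
    (k : Fin n) (hk : k ∈ S) :
    ∃ z : {x // x ∈ S} → ℝ, z ≠ 0 ∧
      ((G.lapMatrix ℝ).submatrix (fun i : {x // x ∈ S} => (i : Fin n))
          (fun j : {x // x ∈ S} => (j : Fin n))) *ᵥ z = α • z ∧
      z ⟨k, hk⟩ = 0 ∧ ∑ i, z i = 0 :=
  principal_submatrix_eigenvector_vanishing_coordinate_general n m G α hα hmult S hS k hk
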